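/- For any two density matrices ρ and σ of the same size, dist(ρ,σ) ≤ √(1 − F(ρ,σ)²); that is, the trace distance is at most the square root of one minus the squared fidelity. (Second inequality of Lemma on fidelity/trace-distance relations, item 1.) -/

import Mathlib

/-!
Let `P` be the spectral projection of `ρ - σ` onto its positive part, and `p = tr ρP`,
`q = tr σP`; then `dist(ρ,σ) = p - q`. The polar decomposition of `√σ√ρ` gives a contraction `C`
with `F(ρ,σ) = tr (C√σ(P + (1 - P))√ρ)`, and Cauchy–Schwarz for the trace inner product bounds each
of the two terms, so that `F ≤ √(pq) + √((1-p)(1-q))`, the fidelity of the outcome distributions of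
the measurement `{P, 1 - P}`. The claim then reduces to
`(p - q)² + (√(pq) + √((1-p)(1-q)))² ≤ 1`.
-/

open scoped Matrix ComplexOrder

/-- The positive semidefinite square root of a matrix (junk value `0` if the matrix is not
positive semidefinite). -/
noncomputable def psdSqrt {m : ℕ} (A : Matrix (Fin m) (Fin m) ℂ) : Matrix (Fin m) (Fin m) ℂ :=
  letI := Classical.dec A.PosSemidef
  if h : A.PosSemidef then
    (h.1.eigenvectorUnitary : Matrix (Fin m) (Fin m) ℂ) *
      Matrix.diagonal ((↑) ∘ Real.sqrt ∘ h.1.eigenvalues) *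
      (star (h.1.eigenvectorUnitary : Matrix (Fin m) (Fin m) ℂ)) else 0

/-- The fidelity `F(ρ,σ) = tr √(√ρ · σ · √ρ)` of two density matrices. -/
noncomputable def fidelity {m : ℕ} (ρ σ : Matrix (Fin m) (Fin m) ℂ) : ℝ :=
  ((psdSqrt (psdSqrt ρ * σ * psdSqrt ρ)).trace).re

/-- The trace distance `dist(ρ,σ) = (1/2)·tr √((ρ−σ)†(ρ−σ))` of two density matrices. -/
noncomputable def traceDist {m : ℕ} (ρ σ : Matrix (Fin m) (Fin m) ℂ) : ℝ :=
  (1 / 2) * ((psdSqrt ((ρ - σ)ᴴ * (ρ - σ))).trace).re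

open Matrix RCLike
open scoped MatrixOrder

theorem sub_le_sqrt_one_sub_sq {a b F : ℝ} (ha : a ∈ Set.Icc 0 1) (hb : b ∈ Set.Icc 0 1)
    (hF0 : 0 ≤ F) (hF : F ≤ √a * √b + √(1 - a) * √(1 - b)) :
    a - b ≤ √(1 - F ^ 2) := by
  obtain ⟨ha0, ha1⟩ := ha
  obtain ⟨hb0, hb1⟩ := hb
  have hsa : √a ^ 2 = a := Real.sq_sqrt ha0
  have hsb : √b ^ 2 = b := Real.sq_sqrt hb0
  have hsa' : √(1 - a) ^ 2 = 1 - a := Real.sq_sqrt (by linarith)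
  have hsb' : √(1 - b) ^ 2 = 1 - b := Real.sq_sqrt (by linarith)
  -- `(a - b)² + (√(ab) + √((1-a)(1-b)))² = 1 - (√(a(1-a)) - √(b(1-b)))²`
  have hsq : (a - b) ^ 2 + (√a * √b + √(1 - a) * √(1 - b)) ^ 2 ≤ 1 := by
    nlinarith [sq_nonneg (√a * √(1 - a) - √b * √(1 - b))]
  have hF2 : F ^ 2 ≤ (√a * √b + √(1 - a) * √(1 - b)) ^ 2 := pow_le_pow_left₀ hF0 hF 2
  exact (le_abs_self _).trans (Real.abs_le_sqrt (by linarith))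

namespace Matrix

variable {𝕜 n : Type*} [RCLike 𝕜] [Fintype n]

theorem re_trace_nonneg {A : Matrix n n 𝕜} (hA : 0 ≤ A) : 0 ≤ re A.trace :=
  (RCLike.nonneg_iff.mp hA.posSemidef.trace_nonneg).1

variable [DecidableEq n]

theorem re_trace_mul_conjTranspose_le_sqrt_mul_sqrt (X Y : Matrix n n 𝕜) :
    re (Y * Xᴴ).trace ≤ √(re (X * Xᴴ).trace) * √(re (Y * Yᴴ).trace) := by
  let := (1 : Matrix n n 𝕜).toMatrixSeminormedAddCommGroup PosSemidef.one
  let := (1 : Matrix n n 𝕜).toMatrixInnerProductSpace PosSemidef.one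
  have h := re_inner_le_norm (𝕜 := 𝕜) X Y
  rw [norm_eq_sqrt_re_inner (𝕜 := 𝕜) X, norm_eq_sqrt_re_inner (𝕜 := 𝕜) Y] at h
  change re (Y * 1 * Xᴴ).trace ≤
    √(re (X * 1 * Xᴴ).trace) * √(re (Y * 1 * Yᴴ).trace) at h
  simpa only [Matrix.mul_one] using h

theorem re_trace_mul_nonneg {A B : Matrix n n 𝕜} (hA : 0 ≤ A) (hB : 0 ≤ B) :
    0 ≤ re (A * B).trace := by
  have hS : star (CFC.sqrt B) = CFC.sqrt B := (CFC.sqrt_nonneg B).isSelfAdjoint.star_eq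
  have hconj : 0 ≤ CFC.sqrt B * A * CFC.sqrt B := by
    simpa only [hS] using star_left_conjugate_nonneg hA (CFC.sqrt B)
  rw [← CFC.sqrt_mul_sqrt_self B hB, ← Matrix.mul_assoc, trace_mul_cycle]
  exact re_trace_nonneg hconj

theorem re_trace_mul_one_sub (A P : Matrix n n 𝕜) :
    re (A * (1 - P)).trace = re A.trace - re (A * P).trace := by
  rw [Matrix.mul_sub, Matrix.mul_one, trace_sub, map_sub]

theorem re_trace_mul_mem_Icc {A P : Matrix n n 𝕜} (hA : 0 ≤ A) (hP : IsStarProjection P) :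
    re (A * P).trace ∈ Set.Icc 0 (re A.trace) := by
  have h := re_trace_mul_nonneg hA hP.one_sub_nonneg
  rw [re_trace_mul_one_sub, sub_nonneg] at h
  exact ⟨re_trace_mul_nonneg hA hP.nonneg, h⟩

theorem re_trace_conjTranspose_mul_mul_le {B C : Matrix n n 𝕜} (hB : 0 ≤ B) (hC : C * Cᴴ ≤ 1) :
    re (Cᴴ * B * C).trace ≤ re B.trace := by
  have h := re_trace_mul_nonneg hB (sub_nonneg.mpr hC)
  rwa [re_trace_mul_one_sub, sub_nonneg, ← Matrix.mul_assoc, trace_mul_cycle] at h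

theorem re_trace_mul_sqrt_mul_mul_sqrt_le {ρ σ C Q : Matrix n n 𝕜} (hρ : 0 ≤ ρ) (hσ : 0 ≤ σ)
    (hC : C * Cᴴ ≤ 1) (hQ : IsStarProjection Q) :
    re (C * CFC.sqrt σ * Q * CFC.sqrt ρ).trace ≤ √(re (ρ * Q).trace) * √(re (σ * Q).trace) := by
  set R := CFC.sqrt ρ
  set S := CFC.sqrt σ
  have hR : Rᴴ = R := (CFC.sqrt_nonneg ρ).isSelfAdjoint.star_eq
  have hS : Sᴴ = S := (CFC.sqrt_nonneg σ).isSelfAdjoint.star_eq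
  have hQh : Qᴴ = Q := hQ.isSelfAdjoint.star_eq
  have hQQ (X : Matrix n n 𝕜) : Q * (Q * X) = Q * X := by
    rw [← Matrix.mul_assoc, hQ.isIdempotentElem.eq]
  have hRQR : re (R * Q * R).trace = re (ρ * Q).trace := by
    rw [trace_mul_cycle, CFC.sqrt_mul_sqrt_self ρ hρ]
  have hSQS : re (S * Q * S).trace = re (σ * Q).trace := by
    rw [trace_mul_cycle, CFC.sqrt_mul_sqrt_self σ hσ]
  have hRQR_nonneg : 0 ≤ R * Q * R := by
    simpa only [star_eq_conjTranspose, hR] using star_left_conjugate_nonneg hQ.nonneg R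
  have hcycle : (C * S * Q * R).trace = (S * Q * (Cᴴ * R * Q)ᴴ).trace := by
    simp only [conjTranspose_mul, conjTranspose_conjTranspose, hR, hQh, Matrix.mul_assoc, hQQ]
    rw [trace_mul_comm C]
    simp only [Matrix.mul_assoc]
  calc re (C * S * Q * R).trace
      = re (S * Q * (Cᴴ * R * Q)ᴴ).trace := by rw [hcycle]
    _ ≤ √(re ((Cᴴ * R * Q) * (Cᴴ * R * Q)ᴴ).trace) * √(re ((S * Q) * (S * Q)ᴴ).trace) :=
      re_trace_mul_conjTranspose_le_sqrt_mul_sqrt _ _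
    _ = √(re (Cᴴ * (R * Q * R) * C).trace) * √(re (S * Q * S).trace) := by
      simp only [conjTranspose_mul, conjTranspose_conjTranspose, hR, hS, hQh, Matrix.mul_assoc,
        hQQ]
    _ ≤ √(re (ρ * Q).trace) * √(re (σ * Q).trace) := by
      rw [hSQS, ← hRQR]
      exact mul_le_mul_of_nonneg_right
        (Real.sqrt_le_sqrt (re_trace_conjTranspose_mul_mul_le hRQR_nonneg hC)) (Real.sqrt_nonneg _)

theorem exists_mul_eq_abs_and_mul_conjTranspose_le_one (A : Matrix n n 𝕜) :
    ∃ C : Matrix n n 𝕜, C * A = CFC.abs A ∧ C * Cᴴ ≤ 1 := by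
  -- `C = g(AᴴA) Aᴴ`, where `g(AᴴA)` is the pseudo-inverse of `|A|` because `(√0)⁻¹ = 0`
  let g : ℝ → ℝ := fun x ↦ (√x)⁻¹
  have hH : 0 ≤ Aᴴ * A := (posSemidef_conjTranspose_mul_self A).nonneg
  have hg : ContinuousOn g (spectrum ℝ (Aᴴ * A)) := (Aᴴ * A).finite_real_spectrum.continuousOn g
  have hM : (cfc g (Aᴴ * A))ᴴ = cfc g (Aᴴ * A) := (cfc_predicate g (Aᴴ * A)).star_eq
  refine ⟨cfc g (Aᴴ * A) * Aᴴ, ?_, ?_⟩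
  · rw [CFC.abs, star_eq_conjTranspose, CFC.sqrt_eq_real_sqrt _ hH, cfcₙ_eq_cfc,
      Matrix.mul_assoc]
    nth_rw 2 [← cfc_id' ℝ (Aᴴ * A)]
    rw [← cfc_mul g _ _]
    exact cfc_congr fun x _ ↦ by simp [g, ← div_eq_inv_mul]
  · rw [conjTranspose_mul, conjTranspose_conjTranspose, hM, Matrix.mul_assoc,
      ← Matrix.mul_assoc Aᴴ]
    nth_rw 2 [← cfc_id' ℝ (Aᴴ * A)]
    rw [← cfc_mul _ g _, ← cfc_mul g _ _]
    refine cfc_le_one _ _ fun x _ ↦ ?_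
    rcases le_or_gt x 0 with hx | hx
    · simp [g, Real.sqrt_eq_zero'.mpr hx]
    · change (√x)⁻¹ * (x * (√x)⁻¹) ≤ 1
      rw [← Real.sqrt_inv, mul_left_comm, Real.mul_self_sqrt (inv_nonneg.mpr hx.le),
        mul_inv_cancel₀ hx.ne']

theorem re_trace_abs_sqrt_mul_sqrt_le {ρ σ P : Matrix n n 𝕜} (hρ : 0 ≤ ρ) (hσ : 0 ≤ σ)
    (hP : IsStarProjection P) :
    re (CFC.abs (CFC.sqrt σ * CFC.sqrt ρ)).trace ≤
      √(re (ρ * P).trace) * √(re (σ * P).trace) +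
        √(re (ρ * (1 - P)).trace) * √(re (σ * (1 - P)).trace) := by
  obtain ⟨C, hCA, hC⟩ :=
    exists_mul_eq_abs_and_mul_conjTranspose_le_one (CFC.sqrt σ * CFC.sqrt ρ)
  have hsplit : CFC.abs (CFC.sqrt σ * CFC.sqrt ρ) =
      C * CFC.sqrt σ * P * CFC.sqrt ρ + C * CFC.sqrt σ * (1 - P) * CFC.sqrt ρ := by
    rw [← hCA, ← Matrix.add_mul, ← Matrix.mul_add, add_sub_cancel, Matrix.mul_one,
      Matrix.mul_assoc]
  rw [hsplit, trace_add, map_add]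
  exact add_le_add (re_trace_mul_sqrt_mul_mul_sqrt_le hρ hσ hC hP)
    (re_trace_mul_sqrt_mul_mul_sqrt_le hρ hσ hC hP.one_sub)

theorem exists_isStarProjection_mul_eq_posPart {A : Matrix n n 𝕜} (hA : IsSelfAdjoint A) :
    ∃ P : Matrix n n 𝕜, IsStarProjection P ∧ A * P = A⁺ := by
  let χ : ℝ → ℝ := fun x ↦ if 0 < x then 1 else 0
  have hχ : ContinuousOn χ (spectrum ℝ A) := A.finite_real_spectrum.continuousOn χ
  refine ⟨cfc χ A, ⟨?_, cfc_predicate χ A⟩, ?_⟩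
  · rw [IsIdempotentElem, ← cfc_mul χ χ A]
    refine cfc_congr fun x _ ↦ ?_
    by_cases hx : 0 < x <;> simp [χ, hx]
  · nth_rw 1 [← cfc_id' ℝ A]
    rw [CFC.posPart_def, cfcₙ_eq_cfc, ← cfc_mul _ _ A]
    refine cfc_congr fun x _ ↦ ?_
    by_cases hx : 0 < x
    · simp [χ, hx, hx.le]
    · simp [χ, hx, posPart_eq_zero.mpr (not_lt.mp hx)]

theorem exists_isStarProjection_re_trace_abs_sub_eq {ρ σ : Matrix n n 𝕜} (hρ : IsSelfAdjoint ρ)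
    (hσ : IsSelfAdjoint σ) (htr : ρ.trace = σ.trace) :
    ∃ P : Matrix n n 𝕜, IsStarProjection P ∧
      re (CFC.abs (ρ - σ)).trace = 2 * (re (ρ * P).trace - re (σ * P).trace) := by
  obtain ⟨P, hP, hΔP⟩ := exists_isStarProjection_mul_eq_posPart (hρ.sub hσ)
  refine ⟨P, hP, ?_⟩
  have h := congr(re (trace $(CFC.abs_add_self (ρ - σ) (hρ.sub hσ))))
  rw [← hΔP, trace_add, trace_sub ρ σ, htr, sub_self, add_zero, trace_smul, Matrix.sub_mul,
    trace_sub] at h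
  simpa [two_mul, map_sub] using h

end Matrix

theorem psdSqrt_eq_sqrt {m : ℕ} {A : Matrix (Fin m) (Fin m) ℂ} (h : A.PosSemidef) :
    psdSqrt A = CFC.sqrt A := by
  rw [psdSqrt, dif_pos h, CFC.sqrt_eq_cfc, cfc_nnreal_eq_real _ A h.nonneg, h.1.cfc_eq]
  simp only [IsHermitian.cfc, Real.coe_sqrt, Real.coe_toNNReal', Unitary.conjStarAlgAut_apply]
  congr 3
  funext i
  simp [max_eq_left (h.eigenvalues_nonneg i)]

theorem traceDist_eq_re_trace_abs {m : ℕ} (ρ σ : Matrix (Fin m) (Fin m) ℂ) :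
    traceDist ρ σ = 1 / 2 * re (CFC.abs (ρ - σ)).trace := by
  rw [traceDist, psdSqrt_eq_sqrt (posSemidef_conjTranspose_mul_self _), CFC.abs,
    star_eq_conjTranspose, RCLike.re_to_complex]

theorem fidelity_eq_re_trace_abs {m : ℕ} {ρ σ : Matrix (Fin m) (Fin m) ℂ} (hρ : ρ.PosSemidef)
    (hσ : σ.PosSemidef) :
    fidelity ρ σ = re (CFC.abs (CFC.sqrt σ * CFC.sqrt ρ)).trace := by
  have hsq : star (CFC.sqrt σ * CFC.sqrt ρ) * (CFC.sqrt σ * CFC.sqrt ρ) =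
      CFC.sqrt ρ * σ * CFC.sqrt ρ := by
    rw [star_mul, (CFC.sqrt_nonneg ρ).isSelfAdjoint.star_eq,
      (CFC.sqrt_nonneg σ).isSelfAdjoint.star_eq, Matrix.mul_assoc,
      ← Matrix.mul_assoc _ _ (CFC.sqrt ρ),
      CFC.sqrt_mul_sqrt_self σ hσ.nonneg, Matrix.mul_assoc]
  have hpsd : (CFC.sqrt ρ * σ * CFC.sqrt ρ).PosSemidef := by
    rw [← hsq, star_eq_conjTranspose]
    exact posSemidef_conjTranspose_mul_self _
  rw [fidelity, psdSqrt_eq_sqrt hρ, psdSqrt_eq_sqrt hpsd, CFC.abs, hsq, RCLike.re_to_complex]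

/-- For any two density matrices, the trace distance is at most the square root of one minus
the squared fidelity. -/
theorem traceDist_le_sqrt_one_sub_fidelity_sq {m : ℕ} (ρ σ : Matrix (Fin m) (Fin m) ℂ)
    (hρ : ρ.PosSemidef) (hσ : σ.PosSemidef) (hρ1 : ρ.trace = 1) (hσ1 : σ.trace = 1) :
    traceDist ρ σ ≤ Real.sqrt (1 - fidelity ρ σ ^ 2) := by
  obtain ⟨P, hP, hdist⟩ := exists_isStarProjection_re_trace_abs_sub_eq hρ.isHermitian
    hσ.isHermitian (hρ1.trans hσ1.symm)
  have hρ1' : re ρ.trace = 1 := by simp [hρ1]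
  have hσ1' : re σ.trace = 1 := by simp [hσ1]
  have hp := re_trace_mul_mem_Icc hρ.nonneg hP
  have hq := re_trace_mul_mem_Icc hσ.nonneg hP
  have hfid := re_trace_abs_sqrt_mul_sqrt_le hρ.nonneg hσ.nonneg hP
  rw [re_trace_mul_one_sub, re_trace_mul_one_sub, hρ1', hσ1'] at hfid
  rw [hρ1'] at hp
  rw [hσ1'] at hq
  rw [traceDist_eq_re_trace_abs, hdist, one_div, inv_mul_cancel_left₀ two_ne_zero,
    fidelity_eq_re_trace_abs hρ hσ]
  exact sub_le_sqrt_one_sub_sq hp hq (re_trace_nonneg (CFC.abs_nonneg _)) hfid
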